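/- Let T be a finite directed tree satisfying conditions (G1), (G2), (G3). Let s be a split node (out-degree 2) of T, and form a graph F from T as follows: delete s, delete the leaf ℓ incident to the incoming arc of s, and for each of the two outgoing arcs (s, u) of s, add a new node ℓ_u with a single new arc (ℓ_u, u). Then F is a disjoint union of exactly two directed trees, each of which satisfies conditions (G1), (G2), (G3). -/

import Mathlib

/-!
Deleting the split node `s` from `T` leaves one component per neighbour of `s`. The component
of the leaf `ℓ` is `{ℓ}`. For an out-neighbour `u`, the branch `B_u` of nodes joined to `u` by a
walk avoiding `s` spans, together with `s`, a subtree of `T` that is isomorphic to the component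
of the split graph containing `u`, with `s` in the role of the new leaf `ℓ_u`. Nodes of `B_u`
keep all their neighbours, hence their degrees, and `s` becomes a source leaf: its in-neighbour
`ℓ` is outside, and by acyclicity its other out-neighbour lies in the other branch. So (G1)–(G3)
pass to both subtrees.
-/

structure DirTree where
  V : Type
  [fintypeV : Fintype V]
  arc : V → V → Prop
  noLoop : ∀ v, ¬ arc v v
  noTwoWay : ∀ u v, arc u v → ¬ arc v u
  isTree : (SimpleGraph.fromRel arc).IsTree

attribute [instance] DirTree.fintypeV

namespace DirTree
variable (T : DirTree)

/-- Number of outgoing arcs at `v`. -/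
noncomputable def outDeg (v : T.V) : ℕ := Nat.card {u : T.V // T.arc v u}

/-- Number of incoming arcs at `v`. -/
noncomputable def inDeg (v : T.V) : ℕ := Nat.card {u : T.V // T.arc u v}

/-- Total degree of `v`. -/
noncomputable def deg (v : T.V) : ℕ := T.inDeg v + T.outDeg v

/-- A leaf is a node of total degree 1. -/
def IsLeaf (v : T.V) : Prop := T.deg v = 1

/-- (G1): every leaf has in-degree 0 and out-degree 1. -/
def G1 : Prop := ∀ v, T.IsLeaf v → T.inDeg v = 0 ∧ T.outDeg v = 1

/-- (G2): every interior node has total degree 3 and at most two outgoing arcs. -/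
def G2 : Prop := ∀ v, ¬ T.IsLeaf v → T.deg v = 3 ∧ T.outDeg v ≤ 2

/-- (G3): every node of out-degree 2 has its incoming arcs coming from leaves. -/
def G3 : Prop := ∀ v, T.outDeg v = 2 → ∀ u, T.arc u v → T.IsLeaf u

/-- A split node has out-degree 2. -/
def IsSplit (v : T.V) : Prop := T.outDeg v = 2

/-- A peak node has in-degree 3. -/
def IsPeak (v : T.V) : Prop := T.inDeg v = 3

end DirTree

/-- Vertex set of the graph obtained from `T` by deleting the split node `s` and the
leaf `ℓ`, and adding one new leaf `ℓ_u` for each out-neighbor `u` of `s`. -/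
def SplitV (T : DirTree) (s ℓ : T.V) : Type :=
  {v : T.V // v ≠ s ∧ v ≠ ℓ} ⊕ {u : T.V // T.arc s u}

/-- Arc relation of the graph obtained by the splitting operation at `s`:
old arcs among surviving nodes are kept, and each new leaf `ℓ_u` gets a single
arc `(ℓ_u, u)`. -/
def SplitArc (T : DirTree) (s ℓ : T.V) : SplitV T s ℓ → SplitV T s ℓ → Prop
  | Sum.inl a, Sum.inl b => T.arc a.1 b.1
  | Sum.inr u, Sum.inl b => u.1 = b.1
  | _, _ => False

namespace SimpleGraph

variable {V : Type*} {G : SimpleGraph V} {s u v w ℓ : V}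

def branch (G : SimpleGraph V) (s u : V) : Set V :=
  {v | ∃ p : G.Walk v u, s ∉ p.support}

lemma ne_of_mem_branch (h : v ∈ G.branch s u) : v ≠ s := by
  rintro rfl
  obtain ⟨p, hp⟩ := h
  exact hp p.start_mem_support

lemma mem_branch_self (h : u ≠ s) : u ∈ G.branch s u :=
  ⟨.nil, by simpa using h.symm⟩

lemma mem_branch_of_adj (h : v ∈ G.branch s u) (hadj : G.Adj w v) (hw : w ≠ s) :
    w ∈ G.branch s u := by
  obtain ⟨p, hp⟩ := h
  exact ⟨.cons hadj p, by simp [hp, hw.symm]⟩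

lemma mem_branch_comm : v ∈ G.branch s u ↔ u ∈ G.branch s v := by
  constructor <;> rintro ⟨p, hp⟩ <;> exact ⟨p.reverse, by simpa using hp⟩

lemma support_subset_branch {p : G.Walk v u} (hp : s ∉ p.support) :
    {x | x ∈ p.support} ⊆ G.branch s u := by
  classical
  exact fun x hx => ⟨p.dropUntil x hx, fun hs => hp (p.support_dropUntil_subset_support hx hs)⟩

lemma induce_branch_connected (hu : u ≠ s) : (G.induce (G.branch s u)).Connected :=
  induce_connected_of_patches u (mem_branch_self hu) fun ⟨p, hp⟩ =>
    ⟨_, support_subset_branch hp, p.end_mem_support, p.start_mem_support,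
      p.connected_induce_support.preconnected _ _⟩

lemma induce_insert_branch_connected (h : G.Adj s u) :
    (G.induce (insert s (G.branch s u))).Connected := by
  rw [← Set.singleton_union]
  exact connected_induce_union Preconnected.of_subsingleton
    (induce_branch_connected h.ne.symm).preconnected rfl (mem_branch_self h.ne.symm) h

lemma notMem_branch_of_forall_adj (hℓ : ∀ w, G.Adj ℓ w → w = s) (hu : u ≠ ℓ) :
    ℓ ∉ G.branch s u := by
  rintro ⟨p, hp⟩
  cases p with
  | nil => exact hu rfl
  | cons h p => exact hp (by simp [← hℓ _ h])

lemma Walk.exists_adj_mem_branch : ∀ {v : V}, G.Walk v s → v ≠ s →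
    ∃ u, G.Adj s u ∧ v ∈ G.branch s u
  | _, .nil, hv => absurd rfl hv
  | v, .cons (v := x) h p, hv => by
    by_cases hx : x = s
    · subst hx
      exact ⟨v, h.symm, mem_branch_self hv⟩
    · obtain ⟨u, hu, hxu⟩ := p.exists_adj_mem_branch hx
      exact ⟨u, hu, mem_branch_of_adj hxu h hv⟩

/-- In an acyclic graph, a walk between two branches at `s` that avoids `s` would give a
second path between two neighbours of `s`. -/
lemma IsAcyclic.disjoint_branch (hG : G.IsAcyclic) {u₁ u₂ : V} (h₁ : G.Adj s u₁)
    (h₂ : G.Adj s u₂) (hne : u₁ ≠ u₂) : Disjoint (G.branch s u₁) (G.branch s u₂) := by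
  classical
  refine Set.disjoint_left.2 fun v ⟨p₁, hp₁⟩ ⟨p₂, hp₂⟩ => ?_
  have hp : s ∉ (p₁.reverse.append p₂).support := by
    rw [Walk.support_append, List.mem_append, not_or]
    exact ⟨by simpa using hp₁, fun h => hp₂ (List.mem_of_mem_tail h)⟩
  have hq : (Walk.cons h₁.symm (Walk.cons h₂ .nil)).IsPath := by
    simp [Walk.cons_isPath_iff, h₁.ne.symm, hne, h₂.ne]
  have := (hG.subsingleton_path u₁ u₂).elim (p₁.reverse.append p₂).toPath ⟨_, hq⟩
  exact hp (Walk.support_toPath_subset_support _ (by simp [this]))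

lemma IsAcyclic.eq_of_adj_of_mem_branch (hG : G.IsAcyclic) {u' : V} (h : G.Adj s u)
    (h' : G.Adj s u') (hu' : u' ∈ G.branch s u) : u' = u := by
  by_contra hne
  exact Set.disjoint_left.1 (hG.disjoint_branch h' h hne) (mem_branch_self h'.ne.symm) hu'

end SimpleGraph

namespace DirTree

open SimpleGraph

variable {T : DirTree}

abbrev graph (T : DirTree) : SimpleGraph T.V := SimpleGraph.fromRel T.arc

lemma graph_adj_of_arc {a b : T.V} (h : T.arc a b) : T.graph.Adj a b :=
  (fromRel_adj _ _ _).2 ⟨fun e => T.noLoop a (e ▸ h), Or.inl h⟩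

lemma eq_of_outDeg_eq_one {v a b : T.V} (h : T.outDeg v = 1) (ha : T.arc v a)
    (hb : T.arc v b) : a = b :=
  congrArg Subtype.val ((Nat.card_eq_one_iff_unique.1 h).1.elim ⟨a, ha⟩ ⟨b, hb⟩)

lemma eq_of_inDeg_eq_one {v a b : T.V} (h : T.inDeg v = 1) (ha : T.arc a v)
    (hb : T.arc b v) : a = b :=
  congrArg Subtype.val ((Nat.card_eq_one_iff_unique.1 h).1.elim ⟨a, ha⟩ ⟨b, hb⟩)

lemma not_arc_of_inDeg_eq_zero {v : T.V} (h : T.inDeg v = 0) (a : T.V) : ¬ T.arc a v :=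
  fun ha => (Finite.card_eq_zero_iff.1 h).elim ⟨a, ha⟩

noncomputable def induce (T : DirTree) (S : Set T.V) (hS : (T.graph.induce S).Connected) :
    DirTree where
  V := S
  fintypeV := Fintype.ofFinite S
  arc a b := T.arc a b
  noLoop a := T.noLoop a
  noTwoWay a b := T.noTwoWay a b
  isTree := by
    have : SimpleGraph.fromRel (fun a b : S => T.arc a b) = T.graph.induce S := by
      ext a b
      simp [Subtype.ext_iff]
    exact this ▸ ⟨hS, T.isTree.isAcyclic.induce S⟩

section induce

variable {S : Set T.V} {hS : (T.graph.induce S).Connected}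

lemma outDeg_induce (v : S) (h : ∀ b, T.arc v b → b ∈ S) :
    (T.induce S hS).outDeg v = T.outDeg v :=
  Nat.card_congr (Equiv.subtypeSubtypeEquivSubtype (h _))

lemma inDeg_induce (v : S) (h : ∀ a, T.arc a v → a ∈ S) :
    (T.induce S hS).inDeg v = T.inDeg v :=
  Nat.card_congr (Equiv.subtypeSubtypeEquivSubtype (h _))

end induce

theorem G1_G2_G3_of_degrees {T' : DirTree} (hG1 : T.G1) (hG2 : T.G2) (hG3 : T.G3)
    (g : T'.V → T.V) (hg : ∀ x y, T'.arc x y → T.arc (g x) (g y)) (x₀ : T'.V)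
    (hin₀ : T'.inDeg x₀ = 0) (hout₀ : T'.outDeg x₀ = 1)
    (hin : ∀ x, x ≠ x₀ → T'.inDeg x = T.inDeg (g x))
    (hout : ∀ x, x ≠ x₀ → T'.outDeg x = T.outDeg (g x)) :
    T'.G1 ∧ T'.G2 ∧ T'.G3 := by
  have hdeg (x) (hx : x ≠ x₀) : T'.deg x = T.deg (g x) := by
    simp only [deg, hin x hx, hout x hx]
  have hleaf (x) (hx : x ≠ x₀) : T'.IsLeaf x ↔ T.IsLeaf (g x) := by
    rw [IsLeaf, IsLeaf, hdeg x hx]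
  have hleaf₀ : T'.IsLeaf x₀ := by simp [IsLeaf, deg, hin₀, hout₀]
  refine ⟨fun x hx => ?_, fun x hx => ?_, fun x hx y hy => ?_⟩
  · by_cases h : x = x₀
    · exact h ▸ ⟨hin₀, hout₀⟩
    · rw [hin x h, hout x h]
      exact hG1 _ ((hleaf x h).1 hx)
  · have h : x ≠ x₀ := by rintro rfl; exact hx hleaf₀
    rw [hdeg x h, hout x h]
    exact hG2 _ (mt (hleaf x h).2 hx)
  · have h : x ≠ x₀ := by rintro rfl; omega
    by_cases hy₀ : y = x₀
    · exact hy₀ ▸ hleaf₀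
    · exact (hleaf y hy₀).2 (hG3 _ (hout x h ▸ hx) _ (hg y x hy))

lemma G2.eq_of_arc_of_outDeg_eq_two (hG2 : T.G2) {s ℓ a : T.V} (hs : T.outDeg s = 2)
    (hℓ : T.arc ℓ s) (ha : T.arc a s) : a = ℓ := by
  have hnl : ¬ T.IsLeaf s := by simp [IsLeaf, deg, hs]
  have hin : T.inDeg s = 1 := by
    have := (hG2 s hnl).1
    simp only [deg, hs] at this
    omega
  exact eq_of_inDeg_eq_one hin ha hℓ

lemma G1.eq_of_adj_of_isLeaf (hG1 : T.G1) {s ℓ w : T.V} (hleaf : T.IsLeaf ℓ) (hℓ : T.arc ℓ s)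
    (hw : T.graph.Adj ℓ w) : w = s := by
  obtain ⟨hin, hout⟩ := hG1 ℓ hleaf
  rcases ((fromRel_adj _ _ _).1 hw).2 with h | h
  · exact eq_of_outDeg_eq_one hout h hℓ
  · exact absurd h (not_arc_of_inDeg_eq_zero hin w)

lemma exists_arcs_of_outDeg_eq_two {s : T.V} (hs : T.outDeg s = 2) :
    ∃ u₁ u₂, u₁ ≠ u₂ ∧ T.arc s u₁ ∧ T.arc s u₂ ∧ ∀ b, T.arc s b → b = u₁ ∨ b = u₂ := by
  obtain ⟨⟨u₁, h₁⟩, ⟨u₂, h₂⟩, hne, huniv⟩ := Nat.card_eq_two_iff.1 hs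
  refine ⟨u₁, u₂, fun h => hne (Subtype.ext h), h₁, h₂, fun b hb => ?_⟩
  have : (⟨b, hb⟩ : {b // T.arc s b}) ∈ ({⟨u₁, h₁⟩, ⟨u₂, h₂⟩} : Set _) := huniv ▸ trivial
  simpa [Subtype.ext_iff] using this

variable {s ℓ u u₁ u₂ : T.V}

/-- Isomorphic to the component of the split graph containing `u`, with `s` in the role of the
new leaf `ℓ_u`. -/
noncomputable def branchTree (T : DirTree) (s u : T.V) (hu : T.arc s u) : DirTree :=
  T.induce (insert s (T.graph.branch s u)) (induce_insert_branch_connected (graph_adj_of_arc hu))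

lemma mem_insert_branch_of_arc {v b : T.V} (hv : v ∈ T.graph.branch s u) (h : T.arc v b) :
    b ∈ insert s (T.graph.branch s u) :=
  or_iff_not_imp_left.2 fun hb => mem_branch_of_adj hv (graph_adj_of_arc h).symm hb

lemma mem_insert_branch_of_arc' {v a : T.V} (hv : v ∈ T.graph.branch s u) (h : T.arc a v) :
    a ∈ insert s (T.graph.branch s u) :=
  or_iff_not_imp_left.2 fun ha => mem_branch_of_adj hv (graph_adj_of_arc h) ha

lemma notMem_insert_branch (hpend : ∀ w, T.graph.Adj ℓ w → w = s) (hℓ : T.arc ℓ s)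
    (hu : T.arc s u) : ℓ ∉ insert s (T.graph.branch s u) := by
  have hℓs : ℓ ≠ s := fun h => T.noLoop s (h ▸ hℓ)
  have huℓ : u ≠ ℓ := fun h => T.noTwoWay s ℓ (h ▸ hu) hℓ
  simpa [hℓs] using notMem_branch_of_forall_adj hpend huℓ

theorem branchTree_G1_G2_G3 (hG1 : T.G1) (hG2 : T.G2) (hG3 : T.G3) (hu : T.arc s u)
    (hins : ∀ a, T.arc a s → a = ℓ) (hℓ : ℓ ∉ insert s (T.graph.branch s u)) :
    (T.branchTree s u hu).G1 ∧ (T.branchTree s u hu).G2 ∧ (T.branchTree s u hu).G3 := by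
  have hus : u ≠ s := fun h => T.noLoop s (h ▸ hu)
  have mem_branch (x : (insert s (T.graph.branch s u) : Set T.V))
      (hx : x ≠ ⟨s, Set.mem_insert _ _⟩) : x.1 ∈ T.graph.branch s u :=
    x.2.resolve_left fun h => hx (Subtype.ext h)
  refine G1_G2_G3_of_degrees hG1 hG2 hG3 (T' := T.branchTree s u hu) Subtype.val
    (fun _ _ h => h) ⟨s, Set.mem_insert _ _⟩ ?_ ?_
    (fun x hx => inDeg_induce x fun _ => mem_insert_branch_of_arc' (mem_branch x hx))
    (fun x hx => outDeg_induce x fun _ => mem_insert_branch_of_arc (mem_branch x hx))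
  · exact Finite.card_eq_zero_iff.2 ⟨fun ⟨⟨a, haS⟩, ha⟩ => hℓ (hins a ha ▸ haS)⟩
  · refine Nat.card_eq_one_iff_exists.2
      ⟨⟨⟨u, Set.mem_insert_of_mem _ (mem_branch_self hus)⟩, hu⟩, fun ⟨⟨b, hbS⟩, hb⟩ => ?_⟩
    have hbs : b ≠ s := fun h => T.noLoop s (h ▸ hb)
    exact Subtype.ext <| Subtype.ext <| T.isTree.isAcyclic.eq_of_adj_of_mem_branch
      (graph_adj_of_arc hu) (graph_adj_of_arc hb) (hbS.resolve_left hbs)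

open Classical in
noncomputable def toSplitV (hu : T.arc s u) (hℓ : ℓ ∉ insert s (T.graph.branch s u))
    (v : (insert s (T.graph.branch s u) : Set T.V)) : SplitV T s ℓ :=
  if h : v.1 = s then .inr ⟨u, hu⟩ else .inl ⟨v.1, h, fun e => hℓ (e ▸ v.2)⟩

section toSplitV

variable {hu : T.arc s u} {hℓ : ℓ ∉ insert s (T.graph.branch s u)}
  {hu₁ : T.arc s u₁} {hℓ₁ : ℓ ∉ insert s (T.graph.branch s u₁)}
  {hu₂ : T.arc s u₂} {hℓ₂ : ℓ ∉ insert s (T.graph.branch s u₂)}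

lemma toSplitV_of_eq {v : (insert s (T.graph.branch s u) : Set T.V)} (h : v.1 = s) :
    toSplitV hu hℓ v = .inr ⟨u, hu⟩ :=
  dif_pos h

lemma toSplitV_of_ne {v : (insert s (T.graph.branch s u) : Set T.V)} (h : v.1 ≠ s) :
    toSplitV hu hℓ v = .inl ⟨v.1, h, fun e => hℓ (e ▸ v.2)⟩ :=
  dif_neg h

lemma toSplitV_injective : Function.Injective (toSplitV hu hℓ) := by
  intro a b h
  by_cases ha : a.1 = s <;> by_cases hb : b.1 = s
  · exact Subtype.ext (ha.trans hb.symm)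
  · simp [toSplitV_of_eq ha, toSplitV_of_ne hb] at h
  · simp [toSplitV_of_ne ha, toSplitV_of_eq hb] at h
  · rw [toSplitV_of_ne ha, toSplitV_of_ne hb] at h
    exact Subtype.ext (Subtype.mk.inj (Sum.inl.inj h))

lemma toSplitV_ne_toSplitV (hne : u₁ ≠ u₂) (a : (insert s (T.graph.branch s u₁) : Set T.V))
    (b : (insert s (T.graph.branch s u₂) : Set T.V)) :
    toSplitV hu₁ hℓ₁ a ≠ toSplitV hu₂ hℓ₂ b := by
  intro h
  rcases Set.mem_insert_iff.1 a.2 with ha | ha <;> rcases Set.mem_insert_iff.1 b.2 with hb | hb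
  · rw [toSplitV_of_eq ha, toSplitV_of_eq hb] at h
    exact hne (congrArg Subtype.val (Sum.inr.inj h))
  · simp [toSplitV_of_eq ha, toSplitV_of_ne (ne_of_mem_branch hb)] at h
  · simp [toSplitV_of_ne (ne_of_mem_branch ha), toSplitV_of_eq hb] at h
  · rw [toSplitV_of_ne (ne_of_mem_branch ha), toSplitV_of_ne (ne_of_mem_branch hb)] at h
    have hab : a.1 = b.1 := Subtype.mk.inj (Sum.inl.inj h)
    exact Set.disjoint_left.1 (T.isTree.isAcyclic.disjoint_branch (graph_adj_of_arc hu₁)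
      (graph_adj_of_arc hu₂) hne) ha (hab ▸ hb)

lemma splitArc_toSplitV_iff (hins : ∀ a, T.arc a s → a = ℓ)
    (a b : (insert s (T.graph.branch s u) : Set T.V)) :
    SplitArc T s ℓ (toSplitV hu hℓ a) (toSplitV hu hℓ b) ↔ T.arc a b := by
  rcases Set.mem_insert_iff.1 a.2 with ha | ha <;> rcases Set.mem_insert_iff.1 b.2 with hb | hb
  · simpa [toSplitV_of_eq ha, toSplitV_of_eq hb, SplitArc, ha, hb] using T.noLoop s
  · rw [toSplitV_of_eq ha, toSplitV_of_ne (ne_of_mem_branch hb), ha]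
    exact ⟨fun h => h ▸ hu, fun h => (T.isTree.isAcyclic.eq_of_adj_of_mem_branch
      (graph_adj_of_arc hu) (graph_adj_of_arc h) hb).symm⟩
  · rw [toSplitV_of_ne (ne_of_mem_branch ha), toSplitV_of_eq hb, hb]
    exact ⟨False.elim, fun h => hℓ (hins _ h ▸ a.2)⟩
  · rw [toSplitV_of_ne (ne_of_mem_branch ha), toSplitV_of_ne (ne_of_mem_branch hb)]
    rfl

lemma not_splitArc_toSplitV (hne : u₁ ≠ u₂) (a : (insert s (T.graph.branch s u₁) : Set T.V))
    (b : (insert s (T.graph.branch s u₂) : Set T.V)) :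
    ¬ SplitArc T s ℓ (toSplitV hu₁ hℓ₁ a) (toSplitV hu₂ hℓ₂ b) := by
  rcases Set.mem_insert_iff.1 a.2 with ha | ha <;> rcases Set.mem_insert_iff.1 b.2 with hb | hb
  · simp [toSplitV_of_eq ha, toSplitV_of_eq hb, SplitArc]
  · rw [toSplitV_of_eq ha, toSplitV_of_ne (ne_of_mem_branch hb)]
    intro (h : u₁ = b.1)
    exact hne (T.isTree.isAcyclic.eq_of_adj_of_mem_branch (graph_adj_of_arc hu₂)
      (graph_adj_of_arc hu₁) (h ▸ hb))
  · simp [toSplitV_of_ne (ne_of_mem_branch ha), toSplitV_of_eq hb, SplitArc]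
  · rw [toSplitV_of_ne (ne_of_mem_branch ha), toSplitV_of_ne (ne_of_mem_branch hb)]
    intro h
    exact Set.disjoint_left.1 (T.isTree.isAcyclic.disjoint_branch (graph_adj_of_arc hu₁)
      (graph_adj_of_arc hu₂) hne) (mem_branch_of_adj ha (graph_adj_of_arc h).symm
        (ne_of_mem_branch hb)) hb

end toSplitV

theorem bijective_sumElim_toSplitV (hu₁ : T.arc s u₁)
    (hℓ₁ : ℓ ∉ insert s (T.graph.branch s u₁)) (hu₂ : T.arc s u₂)
    (hℓ₂ : ℓ ∉ insert s (T.graph.branch s u₂)) (hins : ∀ a, T.arc a s → a = ℓ)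
    (hpend : ∀ w, T.graph.Adj ℓ w → w = s) (hne : u₁ ≠ u₂)
    (hout : ∀ b, T.arc s b → b = u₁ ∨ b = u₂) :
    Function.Bijective (Sum.elim (toSplitV hu₁ hℓ₁) (toSplitV hu₂ hℓ₂)) := by
  refine ⟨toSplitV_injective.sumElim toSplitV_injective (toSplitV_ne_toSplitV hne), ?_⟩
  rintro (⟨v, hvs, hvℓ⟩ | ⟨b, hb⟩)
  · obtain ⟨p⟩ := T.isTree.connected.preconnected v s
    obtain ⟨w, hw, hv⟩ := p.exists_adj_mem_branch hvs
    rcases ((fromRel_adj _ _ _).1 hw).2 with h | h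
    · rcases hout w h with rfl | rfl
      · exact ⟨.inl ⟨v, Set.mem_insert_of_mem _ hv⟩, toSplitV_of_ne (hℓ := hℓ₁) hvs⟩
      · exact ⟨.inr ⟨v, Set.mem_insert_of_mem _ hv⟩, toSplitV_of_ne (hℓ := hℓ₂) hvs⟩
    · obtain rfl := hins w h
      exact absurd (mem_branch_comm.1 hv) (notMem_branch_of_forall_adj hpend hvℓ)
  · rcases hout b hb with rfl | rfl
    · exact ⟨.inl ⟨s, Set.mem_insert _ _⟩, toSplitV_of_eq (hℓ := hℓ₁) rfl⟩
    · exact ⟨.inr ⟨s, Set.mem_insert _ _⟩, toSplitV_of_eq (hℓ := hℓ₂) rfl⟩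

end DirTree

/-- splitting a (G1)-(G3) directed tree at a split node `s` (deleting `s`
and the leaf `ℓ` on its incoming arc and capping the two outgoing arcs with new leaves)
yields the disjoint union of exactly two directed trees, each satisfying (G1)-(G3). -/
theorem stmt4 (T : DirTree) (hG1 : T.G1) (hG2 : T.G2) (hG3 : T.G3)
    (s ℓ : T.V) (hs : T.outDeg s = 2) (hℓ : T.arc ℓ s) :
    ∃ (T₁ T₂ : DirTree) (e : (T₁.V ⊕ T₂.V) ≃ SplitV T s ℓ),
      (T₁.G1 ∧ T₁.G2 ∧ T₁.G3) ∧ (T₂.G1 ∧ T₂.G2 ∧ T₂.G3) ∧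
      ∀ x y : T₁.V ⊕ T₂.V,
        SplitArc T s ℓ (e x) (e y) ↔
          ((∃ a b : T₁.V, x = Sum.inl a ∧ y = Sum.inl b ∧ T₁.arc a b) ∨
           (∃ a b : T₂.V, x = Sum.inr a ∧ y = Sum.inr b ∧ T₂.arc a b)) := by
  open DirTree in
  obtain ⟨u₁, u₂, hne, hu₁, hu₂, hout⟩ := exists_arcs_of_outDeg_eq_two hs
  have hins (a) (ha : T.arc a s) : a = ℓ := hG2.eq_of_arc_of_outDeg_eq_two hs hℓ ha
  have hpend (w) (hw : T.graph.Adj ℓ w) : w = s :=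
    hG1.eq_of_adj_of_isLeaf (hG3 s hs ℓ hℓ) hℓ hw
  have hℓ₁ := notMem_insert_branch hpend hℓ hu₁
  have hℓ₂ := notMem_insert_branch hpend hℓ hu₂
  refine ⟨T.branchTree s u₁ hu₁, T.branchTree s u₂ hu₂,
    Equiv.ofBijective _ (bijective_sumElim_toSplitV hu₁ hℓ₁ hu₂ hℓ₂ hins hpend hne hout),
    branchTree_G1_G2_G3 hG1 hG2 hG3 hu₁ hins hℓ₁, branchTree_G1_G2_G3 hG1 hG2 hG3 hu₂ hins hℓ₂, ?_⟩
  rintro (a | a) (b | b)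
  · exact (splitArc_toSplitV_iff (hℓ := hℓ₁) hins a b).trans
      ⟨fun h => .inl ⟨a, b, rfl, rfl, h⟩, by rintro (⟨_, _, ⟨⟩, ⟨⟩, h⟩ | ⟨_, _, ⟨⟩, -⟩); exact h⟩
  · exact iff_of_false (not_splitArc_toSplitV (hℓ₁ := hℓ₁) (hℓ₂ := hℓ₂) hne a b) (by simp)
  · exact iff_of_false (not_splitArc_toSplitV (hℓ₁ := hℓ₂) (hℓ₂ := hℓ₁) hne.symm a b) (by simp)
  · exact (splitArc_toSplitV_iff (hℓ := hℓ₂) hins a b).trans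
      ⟨fun h => .inr ⟨a, b, rfl, rfl, h⟩, by rintro (⟨_, _, ⟨⟩, -⟩ | ⟨_, _, ⟨⟩, ⟨⟩, h⟩); exact h⟩
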